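/- arXiv:2202.07726 — 2 statements merged into one kernel-verified Lean document; each statement's English description precedes it below -/
import Mathlib

section
/- The function f(s) := ∫_a^b g(|s-t|) dt is strictly increasing on [a, (a+b)/2] when g is continuous, strictly decreasing, nonnegative, and integrable on (0, b-a]. -/
open Set MeasureTheory

theorem f_strictMono (a b : ℝ) (hab : a < b) (g : ℝ → ℝ)
    (hgc : ContinuousOn g (Ioc 0 (b - a)))
    (hganti : StrictAntiOn g (Ioc 0 (b - a)))
    (hgpos : ∀ r ∈ Ioc 0 (b - a), 0 ≤ g r)
    (hgint : IntegrableOn g (Ioc 0 (b - a))) :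
    StrictMonoOn (fun s => ∫ t in a..b, g |s - t|) (Icc a ((a + b) / 2)) := by
  -- integrability of g on subintervals of [0, b-a]
  have hII : ∀ x y : ℝ, 0 ≤ x → x ≤ y → y ≤ b - a → IntervalIntegrable g volume x y := by
    intro x y hx hxy hy
    rw [intervalIntegrable_iff_integrableOn_Ioc_of_le hxy]
    exact hgint.mono_set (Ioc_subset_Ioc hx hy)
  -- key formula
  have key : ∀ s ∈ Icc a b,
      (∫ t in a..b, g |s - t|) = (∫ u in (0:ℝ)..(s - a), g u) + ∫ u in (0:ℝ)..(b - s), g u := by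
    intro s hs
    obtain ⟨hsa, hsb⟩ := hs
    have e1 : (∫ t in a..s, g |s - t|) = ∫ u in (0:ℝ)..(s - a), g u := by
      have : (∫ t in a..s, g |s - t|) = ∫ t in a..s, g (s - t) := by
        apply intervalIntegral.integral_congr
        intro t ht
        rw [uIcc_of_le hsa] at ht
        show g |s - t| = g (s - t)
        rw [abs_of_nonneg (by linarith [ht.2] : (0:ℝ) ≤ s - t)]
      rw [this, intervalIntegral.integral_comp_sub_left g s, sub_self]
    have e2 : (∫ t in s..b, g |s - t|) = ∫ u in (0:ℝ)..(b - s), g u := by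
      have : (∫ t in s..b, g |s - t|) = ∫ t in s..b, g (t - s) := by
        apply intervalIntegral.integral_congr
        intro t ht
        rw [uIcc_of_le hsb] at ht
        show g |s - t| = g (t - s)
        rw [abs_of_nonpos (by linarith [ht.1] : s - t ≤ 0), neg_sub]
      rw [this, intervalIntegral.integral_comp_sub_right g s, sub_self]
    have i1 : IntervalIntegrable (fun t => g |s - t|) volume a s := by
      rw [intervalIntegrable_iff_integrableOn_Ioc_of_le hsa]
      have h0 : IntegrableOn (fun t => g (s - t)) (Ioc a s) := by
        have h' : IntervalIntegrable (fun x => g (s - x)) volume a s := by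
          have := ((hII 0 (s - a) le_rfl (by linarith) (by linarith)).comp_sub_left s).symm
          simpa using this
        rwa [intervalIntegrable_iff_integrableOn_Ioc_of_le hsa] at h'
      exact h0.congr_fun (fun t ht => by
        rw [abs_of_nonneg (by linarith [ht.2])]) measurableSet_Ioc
    have i2 : IntervalIntegrable (fun t => g |s - t|) volume s b := by
      rw [intervalIntegrable_iff_integrableOn_Ioc_of_le hsb]
      have h0 : IntegrableOn (fun t => g (t - s)) (Ioc s b) := by
        have h' : IntervalIntegrable (fun x => g (x - s)) volume s b := by
          have := (hII 0 (b - s) le_rfl (by linarith) (by linarith)).comp_sub_right s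
          simpa using this
        rwa [intervalIntegrable_iff_integrableOn_Ioc_of_le hsb] at h'
      exact h0.congr_fun (fun t ht => by
        rw [abs_of_nonpos (by linarith [ht.1]), neg_sub]) measurableSet_Ioc
    rw [← intervalIntegral.integral_add_adjacent_intervals i1 i2, e1, e2]
  -- main argument
  intro s₁ hs₁ s₂ hs₂ hlt
  have hs₁' : s₁ ∈ Icc a b := ⟨hs₁.1, by linarith [hs₁.2]⟩
  have hs₂' : s₂ ∈ Icc a b := ⟨hs₂.1, by linarith [hs₂.2]⟩
  simp only
  rw [key s₁ hs₁', key s₂ hs₂']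
  set α := s₁ - a with hα
  set β := s₂ - a with hβ
  set c := a + b - s₁ - s₂ with hc
  have hcpos : 0 < c := by
    have := hs₂.2
    simp only [hc]; linarith
  have hα0 : 0 ≤ α := by simp only [hα]; linarith [hs₁.1]
  have hαβ : α < β := by simp only [hα, hβ]; linarith
  have hβc : β + c ≤ b - a := by simp only [hβ, hc]; linarith [hs₁.1]
  have hbs1 : b - s₁ = β + c := by simp only [hβ, hc]; ring
  have hbs2 : b - s₂ = α + c := by simp only [hα, hc]; ring
  rw [hbs1, hbs2]
  -- reduce to strict integral inequality
  have I1 : IntervalIntegrable g volume 0 α := hII _ _ le_rfl hα0 (by linarith)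
  have I2 : IntervalIntegrable g volume 0 β := hII _ _ le_rfl (by linarith) (by linarith)
  have I3 : IntervalIntegrable g volume 0 (α + c) := hII _ _ le_rfl (by linarith) (by linarith)
  have I4 : IntervalIntegrable g volume 0 (β + c) := hII _ _ le_rfl (by linarith) (by linarith)
  have Iαβ : IntervalIntegrable g volume α β := hII _ _ hα0 hαβ.le (by linarith)
  have Iαβc : IntervalIntegrable g volume (α + c) (β + c) :=
    hII _ _ (by linarith) (by linarith) hβc
  have d1 : (∫ u in (0:ℝ)..β, g u) - ∫ u in (0:ℝ)..α, g u = ∫ u in α..β, g u :=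
    intervalIntegral.integral_interval_sub_left I2 I1
  have Icomp : IntervalIntegrable (fun u => g (u + c)) volume α β := by
    simpa using Iαβc.comp_add_right c
  have d2 : (∫ u in (0:ℝ)..(β + c), g u) - ∫ u in (0:ℝ)..(α + c), g u
      = ∫ u in α..β, g (u + c) := by
    rw [intervalIntegral.integral_comp_add_right g c]
    exact intervalIntegral.integral_interval_sub_left I4 I3
  have hdiff : 0 < ∫ u in α..β, (g u - g (u + c)) := by
    apply intervalIntegral.intervalIntegral_pos_of_pos_on
    · exact Iαβ.sub Icomp
    · intro u hu
      have hu1 : u ∈ Ioc 0 (b - a) := ⟨lt_of_le_of_lt hα0 hu.1, by linarith [hu.2]⟩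
      have hu2 : u + c ∈ Ioc 0 (b - a) := ⟨by linarith [hu1.1], by linarith [hu.2]⟩
      have := hganti hu1 hu2 (by linarith)
      linarith
    · exact hαβ
  have hsub : (∫ u in α..β, (g u - g (u + c)))
      = (∫ u in α..β, g u) - ∫ u in α..β, g (u + c) := by
    exact intervalIntegral.integral_sub Iαβ Icomp
  rw [hsub] at hdiff
  linarith [d1 ▸ hdiff, d2]
end

section
/- Let X = C([a,b],ℝ) with sup norm, g : (0,b-a] → ℝ weakly singular (continuous, decreasing, nonnegative, integrable), and N : [a,b]²×ℝ → ℝ continuous. Then the Urysohn operator K(x)(s) := ∫_a^b g(|s-t|) N(s,t,x(t)) dt maps X into X, i.e. K(x) is a continuous function of s for every x ∈ X. -/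
/-!
Substituting `u = s - t` writes the integral as `∫ u, k u * 1[s - u ∈ (a, b]] * N s (s - u) (x (s - u))`
over all of `ℝ`, where `k u = g |u|` for `|u| ≤ b - a` (and `0` otherwise) is integrable. For a
fixed `u` the integrand is continuous in `s` unless `s - u` is an endpoint `a` or `b`, which happens
only for two values of `u`, and it is dominated by a constant multiple of `|k u|`; dominated
convergence gives continuity in `s`.
-/

open Set MeasureTheory Filter Topology Function

theorem frontier_Ioc_subset {α : Type*} [LinearOrder α] [TopologicalSpace α] [OrderTopology α]
    [DenselyOrdered α] [NoMaxOrder α] (a b : α) : frontier (Ioc a b) ⊆ {a, b} := by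
  intro x hx
  have hIcc : x ∈ Icc a b := closure_minimal Ioc_subset_Icc_self isClosed_Icc hx.1
  have hIoo : x ∉ Ioo a b := by rw [← interior_Ioc]; exact hx.2
  rcases hIcc.1.eq_or_lt with rfl | ha
  · exact .inl rfl
  rcases hIcc.2.eq_or_lt with rfl | hb
  · exact .inr rfl
  exact absurd ⟨ha, hb⟩ hIoo

theorem ContinuousAt.indicator_of_notMem_frontier {α β : Type*} [TopologicalSpace α]
    [TopologicalSpace β] [Zero β] {s : Set α} {f : α → β} {x : α} (hf : ContinuousAt f x)
    (hx : x ∉ frontier s) : ContinuousAt (s.indicator f) x := by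
  by_cases hint : x ∈ interior s
  · refine hf.congr ?_
    filter_upwards [mem_interior_iff_mem_nhds.1 hint] with y hy
    exact (indicator_of_mem hy f).symm
  · refine continuousAt_const.congr (f := fun _ => 0) ?_
    filter_upwards [isClosed_closure.isOpen_compl.mem_nhds fun h => hx ⟨h, hint⟩] with y hy
    exact (indicator_of_notMem (fun h => hy (subset_closure h)) f).symm

theorem MeasureTheory.IntegrableOn.comp_abs_Icc {E : Type*} [NormedAddCommGroup E] {g : ℝ → E}
    {c : ℝ} (hg : IntegrableOn g (Ioc 0 c)) : IntegrableOn (fun u => g |u|) (Icc (-c) c) := by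
  have hpos : IntegrableOn (fun u => g |u|) (Icc 0 c) :=
    (integrableOn_Icc_iff_integrableOn_Ioc).2 <|
      hg.congr_fun (fun u hu => by rw [abs_of_pos hu.1]) measurableSet_Ioc
  have hneg : IntegrableOn (fun u => g |u|) (Ico (-c) 0) := by
    rw [← neg_zero, ← neg_Ioc]
    exact hg.comp_neg.congr_fun (fun u hu => by rw [abs_of_neg (by simpa using hu.1)])
      measurableSet_Ioc.neg
  refine (hneg.union hpos).mono_set fun u hu => ?_
  rcases lt_or_ge u 0 with h | h
  exacts [.inl ⟨hu.1, h⟩, .inr ⟨h, hu.2⟩]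

section KernelIntegral

variable {E : Type*} [NormedAddCommGroup E] [NormedSpace ℝ E] {k : ℝ → ℝ} {φ : ℝ → ℝ → E}

theorem continuous_setIntegral_Ioc_comp_sub_smul (hk : Integrable k) (hφ : Continuous (uncurry φ))
    (a b : ℝ) : Continuous fun s => ∫ t in Ioc a b, k (s - t) • φ s t := by
  set F : ℝ → ℝ → E := fun s u => ((s - ·) ⁻¹' Ioc a b).indicator (fun u => k u • φ s (s - u)) u
  have hF : ∀ s, ∫ t in Ioc a b, k (s - t) • φ s t = ∫ u, F s u := by
    intro s
    rw [← integral_indicator measurableSet_Ioc, ← integral_sub_left_eq_self _ volume s]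
    refine integral_congr_ae (.of_forall fun u => ?_)
    simp only [F, indicator, mem_preimage, sub_sub_cancel]
  simp_rw [hF, continuous_iff_continuousAt]
  intro s₀
  obtain ⟨C, hC⟩ := IsCompact.exists_bound_of_continuousOn
    ((isCompact_closedBall s₀ 1).prod (isCompact_Icc (a := a) (b := b))) hφ.continuousOn
  -- `max C 0`, since `C` may be negative when `Icc a b` is empty
  refine continuousAt_of_dominated (bound := fun u => ‖k u‖ * max C 0) ?_ ?_
    (hk.norm.mul_const _) ?_
  · refine .of_forall fun s => ?_
    exact (hk.aestronglyMeasurable.smul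
      (by fun_prop : Continuous fun u => φ s (s - u)).aestronglyMeasurable).indicator
        (measurableSet_Ioc.preimage (by fun_prop))
  · filter_upwards [Metric.closedBall_mem_nhds s₀ one_pos] with s hs
    refine .of_forall fun u => ?_
    dsimp only [F]
    by_cases hu : s - u ∈ Ioc a b
    · rw [indicator_of_mem (show u ∈ (s - ·) ⁻¹' Ioc a b from hu), norm_smul]
      exact mul_le_mul_of_nonneg_left
        ((hC (s, s - u) ⟨hs, Ioc_subset_Icc_self hu⟩).trans (le_max_left _ _)) (norm_nonneg _)
    · rw [indicator_of_notMem (show u ∉ (s - ·) ⁻¹' Ioc a b from hu), norm_zero]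
      positivity
  · have hnull : ∀ᵐ u, u ∉ ({s₀ - a, s₀ - b} : Set ℝ) :=
      measure_eq_zero_iff_ae_notMem.1 ((toFinite _).measure_zero _)
    filter_upwards [hnull] with u hu
    refine ContinuousAt.indicator_of_notMem_frontier (s := (· - u) ⁻¹' Ioc a b) (by fun_prop)
      fun h => hu ?_
    rw [mem_insert_iff, mem_singleton_iff]
    obtain h | h : s₀ - u = a ∨ s₀ - u = b :=
      frontier_Ioc_subset a b ((continuous_sub_right u).frontier_preimage_subset _ h)
    exacts [.inl (by linarith), .inr (by linarith)]

theorem continuous_intervalIntegral_comp_sub_smul (hk : Integrable k)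
    (hφ : Continuous (uncurry φ)) (a b : ℝ) :
    Continuous fun s => ∫ t in a..b, k (s - t) • φ s t :=
  (continuous_setIntegral_Ioc_comp_sub_smul hk hφ a b).sub
    (continuous_setIntegral_Ioc_comp_sub_smul hk hφ b a)

end KernelIntegral

theorem urysohn_maps_into_continuous_general (a b : ℝ) (hab : a < b) (g : ℝ → ℝ)
    (hgint : IntegrableOn g (Ioc 0 (b - a)))
    (N : ℝ → ℝ → ℝ → ℝ)
    (hN : Continuous fun p : ℝ × ℝ × ℝ => N p.1 p.2.1 p.2.2)
    (x : ℝ → ℝ) (hx : ContinuousOn x (Icc a b)) :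
    ContinuousOn (fun s => ∫ t in a..b, g |s - t| * N s t (x t)) (Icc a b) := by
  set k := (Icc (-(b - a)) (b - a)).indicator fun u => g |u|
  have hk : Integrable k := hgint.comp_abs_Icc.integrable_indicator measurableSet_Icc
  set X := IccExtend hab.le ((Icc a b).domRestrict x)
  have hX : Continuous X := hx.domRestrict.Icc_extend'
  have hφ : Continuous (uncurry fun s t => N s t (X t)) :=
    hN.comp (continuous_fst.prodMk (continuous_snd.prodMk (hX.comp continuous_snd)))
  refine (continuous_intervalIntegral_comp_sub_smul hk hφ a b).continuousOn.congr
    fun s hs => intervalIntegral.integral_congr fun t ht => ?_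
  rw [uIcc_of_le hab.le] at ht
  have hst : s - t ∈ Icc (-(b - a)) (b - a) :=
    ⟨by linarith [hs.1, ht.2], by linarith [hs.2, ht.1]⟩
  simp only [k, X, indicator_of_mem hst, IccExtend_of_mem hab.le _ ht, domRestrict_apply,
    smul_eq_mul]

theorem urysohn_maps_into_continuous (a b : ℝ) (hab : a < b) (g : ℝ → ℝ)
    (hgc : ContinuousOn g (Ioc 0 (b - a)))
    (hganti : AntitoneOn g (Ioc 0 (b - a)))
    (hgpos : ∀ r ∈ Ioc 0 (b - a), 0 ≤ g r)
    (hgint : IntegrableOn g (Ioc 0 (b - a)))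
    (N : ℝ → ℝ → ℝ → ℝ)
    (hN : Continuous fun p : ℝ × ℝ × ℝ => N p.1 p.2.1 p.2.2)
    (x : ℝ → ℝ) (hx : ContinuousOn x (Icc a b)) :
    ContinuousOn (fun s => ∫ t in a..b, g |s - t| * N s t (x t)) (Icc a b) :=
  urysohn_maps_into_continuous_general a b hab g hgint N hN x hx
end
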